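/- arXiv:2404.16018 — 3 statements merged into one kernel-verified Lean document; each statement's English description precedes it below -/
import Mathlib

section
/- Let μ and η be partitions. For every pair (A,B) ∈ ℤ², the four sets occurring below are finite, and #{cells x of μ : (−a_μ(x)−1, −l_η(x)) = (A,B)} + #{cells x of η : (a_η(x), l_μ(x)+1) = (A,B)} = #{x ∈ ℤ_{>0}×ℤ_{>0} : (−a_μ(x)−1, −l_η(x)) = (A,B)} − #{x ∈ ℤ_{>0}×ℤ_{>0} : (−a_∅(x)−1, −l_∅(x)) = (A,B)}. Equivalently, as an identity of formal Laurent sums (each monomial's total coefficient being the finite signed count above): ∑_{x∈μ} u^{−a_μ(x)−1} v^{−l_η(x)} + ∑_{x∈η} u^{a_η(x)} v^{l_μ(x)+1} = ∑_{x∈ℤ_{>0}²} ( u^{−a_μ(x)−1} v^{−l_η(x)} − u^{−a_∅(x)−1} v^{−l_∅(x)} ). -/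
/-!
STATEMENT 0.
Partitions are encoded as Mathlib `YoungDiagram`s (0-indexed cells `(i, j)` with
`j < rowLen i`; the cell `(i, j)` corresponds to the 1-indexed cell `(i+1, j+1)`).
For a Young diagram `Y` and `x = (i, j) ∈ ℕ × ℕ` (corresponding to the 1-indexed
pair of positive integers `(i+1, j+1)`), the arm and leg are
`a_Y(x) = Y.rowLen i - (j+1)` and `l_Y(x) = Y.colLen j - (i+1)` (as integers).
The empty partition is `⊥ : YoungDiagram`.
-/

/-- The arm length `a_Y(i+1, j+1) = Y_{i+1} - (j+1)` (as an integer, possibly negative). -/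
def armZ (Y : YoungDiagram) (x : ℕ × ℕ) : ℤ := (Y.rowLen x.1 : ℤ) - (x.2 + 1)

/-- The leg length `l_Y(i+1, j+1) = Y'_{j+1} - (i+1)` (as an integer, possibly negative). -/
def legZ (Y : YoungDiagram) (x : ℕ × ℕ) : ℤ := (Y.colLen x.2 : ℤ) - (x.1 + 1)

lemma count_int (N : ℕ) (t : ℤ) (Q : ℕ → Prop) [DecidablePred Q] :
    (∑ i ∈ Finset.range N, if ((i : ℤ) = t ∧ Q i) then (1 : ℤ) else 0)
      = if (0 ≤ t ∧ t < N ∧ Q t.toNat) then 1 else 0 := by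
  by_cases h0 : 0 ≤ t ∧ t < N
  · have ht : t.toNat ∈ Finset.range N := by
      rw [Finset.mem_range]; omega
    rw [Finset.sum_eq_single_of_mem t.toNat ht]
    · have hc : ((t.toNat : ℤ) = t) := Int.toNat_of_nonneg h0.1
      by_cases hQ : Q t.toNat
      · rw [if_pos ⟨hc, hQ⟩, if_pos ⟨h0.1, h0.2, hQ⟩]
      · rw [if_neg (by rintro ⟨_, h⟩; exact hQ h), if_neg (by rintro ⟨_, _, h⟩; exact hQ h)]
    · intro b _ hne
      rw [if_neg]; rintro ⟨hb, _⟩; exact hne (by omega)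
  · rw [if_neg (by tauto)]
    apply Finset.sum_eq_zero
    intro i hi
    rw [Finset.mem_range] at hi
    rw [if_neg]; rintro ⟨h1, _⟩; omega

lemma core_count (N : ℕ) (B : ℤ) (c γ : ℕ → ℕ) (P : ℕ → Prop) [DecidablePred P]
    (hiff : ∀ i m : ℕ, m < c i ↔ (P m ∧ γ m ≤ i))
    (hcN : ∀ i, c i < N) (hBN : B < N)
    (hmN : ∀ m, P m → (m : ℤ) + B < N) :
    (((Finset.range N).filter (fun i : ℕ => (i : ℤ) + 1 - (c i : ℤ) = B)).card : ℤ)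
      - (if 1 ≤ B then 1 else 0)
    = (((Finset.range N).filter (fun m => P m ∧ (γ m : ℤ) = (m : ℤ) + B)).card : ℤ) := by
  have hN0 : 0 < N := lt_of_le_of_lt (Nat.zero_le _) (hcN 0)
  -- the double sum
  set e : ℕ → ℕ → ℤ := fun i m =>
    (if ((m : ℤ) = (i : ℤ) - B ∧ m < c i) then (1 : ℤ) else 0)
      - (if ((m : ℤ) = (i : ℤ) + 1 - B ∧ m < c i) then (1 : ℤ) else 0) with he
  have row : ∀ i ∈ Finset.range N, (∑ m ∈ Finset.range N, e i m)
      = (if ((i : ℤ) + 1 - c i = B) then (1 : ℤ) else 0)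
        - (if ((i : ℤ) + 1 = B) then (1 : ℤ) else 0) := by
    intro i hi
    rw [Finset.mem_range] at hi
    have hci := hcN i
    rw [he]
    simp only
    rw [Finset.sum_sub_distrib,
      count_int N ((i : ℤ) - B) (fun m => m < c i),
      count_int N ((i : ℤ) + 1 - B) (fun m => m < c i)]
    split_ifs <;> omega
  have col : ∀ m ∈ Finset.range N, (∑ i ∈ Finset.range N, e i m)
      = (if (P m ∧ (γ m : ℤ) = (m : ℤ) + B) then (1 : ℤ) else 0) := by
    intro m hm
    rw [he]
    simp only
    rw [Finset.sum_sub_distrib]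
    have h1 : (∑ i ∈ Finset.range N, if ((m : ℤ) = (i : ℤ) - B ∧ m < c i) then (1 : ℤ) else 0)
        = ∑ i ∈ Finset.range N, if ((i : ℤ) = (m : ℤ) + B ∧ (P m ∧ γ m ≤ i)) then (1 : ℤ) else 0 :=
      Finset.sum_congr rfl fun i _ => if_congr (and_congr (by omega) (hiff i m)) rfl rfl
    have h2 : (∑ i ∈ Finset.range N, if ((m : ℤ) = (i : ℤ) + 1 - B ∧ m < c i) then (1 : ℤ) else 0)
        = ∑ i ∈ Finset.range N, if ((i : ℤ) = (m : ℤ) + B - 1 ∧ (P m ∧ γ m ≤ i)) then (1 : ℤ) else 0 :=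
      Finset.sum_congr rfl fun i _ => if_congr (and_congr (by omega) (hiff i m)) rfl rfl
    rw [h1, h2, count_int N ((m : ℤ) + B) (fun i => P m ∧ γ m ≤ i),
      count_int N ((m : ℤ) + B - 1) (fun i => P m ∧ γ m ≤ i)]
    by_cases hP : P m
    · have hB2 := hmN m hP
      simp only [hP, true_and]
      split_ifs <;> omega
    · simp [hP]
  have swap : (∑ i ∈ Finset.range N, ∑ m ∈ Finset.range N, e i m)
      = ∑ m ∈ Finset.range N, ∑ i ∈ Finset.range N, e i m := Finset.sum_comm
  rw [Finset.sum_congr rfl row] at swap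
  rw [Finset.sum_congr rfl col] at swap
  have hBsum : (∑ i ∈ Finset.range N, if ((i : ℤ) + 1 = B) then (1 : ℤ) else 0)
      = if 1 ≤ B then 1 else 0 := by
    have h3 : (∑ i ∈ Finset.range N, if ((i : ℤ) + 1 = B) then (1 : ℤ) else 0)
        = ∑ i ∈ Finset.range N, if ((i : ℤ) = B - 1 ∧ True) then (1 : ℤ) else 0 :=
      Finset.sum_congr rfl fun i _ =>
        if_congr (Iff.intro (fun h => ⟨by omega, trivial⟩) (fun h => by omega)) rfl rfl
    rw [h3, count_int N (B - 1) (fun _ => True)]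
    by_cases hB : 1 ≤ B
    · rw [if_pos ⟨by omega, by omega, trivial⟩, if_pos hB]
    · rw [if_neg (fun h => hB (by omega)), if_neg hB]
  rw [← Finset.sum_boole, ← Finset.sum_boole, ← hBsum, ← Finset.sum_sub_distrib]
  exact swap

lemma rowLen_bot' (i : ℕ) : (⊥ : YoungDiagram).rowLen i = 0 := by
  by_contra h
  exact YoungDiagram.notMem_bot (i, 0)
    (YoungDiagram.mem_iff_lt_rowLen.2 (Nat.pos_of_ne_zero h))

lemma colLen_bot' (j : ℕ) : (⊥ : YoungDiagram).colLen j = 0 := by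
  by_contra h
  exact YoungDiagram.notMem_bot (0, j)
    (YoungDiagram.mem_iff_lt_colLen.2 (Nat.pos_of_ne_zero h))

/-- For every pair `(A, B) ∈ ℤ²` the four sets below are finite, and
`#{x ∈ μ : (-a_μ(x)-1, -l_η(x)) = (A,B)} + #{x ∈ η : (a_η(x), l_μ(x)+1) = (A,B)}
 = #{x ∈ ℤ_{>0}² : (-a_μ(x)-1, -l_η(x)) = (A,B)} - #{x ∈ ℤ_{>0}² : (-a_∅(x)-1, -l_∅(x)) = (A,B)}`,
which is the coefficientwise form of the formal Laurent-sum identity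
`∑_{x∈μ} u^{-a_μ(x)-1} v^{-l_η(x)} + ∑_{x∈η} u^{a_η(x)} v^{l_μ(x)+1}
 = ∑_{x∈ℤ_{>0}²} (u^{-a_μ(x)-1} v^{-l_η(x)} - u^{-a_∅(x)-1} v^{-l_∅(x)})`. -/
theorem statement0 (μ η : YoungDiagram) (A B : ℤ) :
    {x : ℕ × ℕ | -armZ μ x - 1 = A ∧ -legZ η x = B}.Finite ∧
    {x : ℕ × ℕ | -armZ ⊥ x - 1 = A ∧ -legZ ⊥ x = B}.Finite ∧
    ((μ.cells.filter fun x => -armZ μ x - 1 = A ∧ -legZ η x = B).card : ℤ)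
      + ((η.cells.filter fun x => armZ η x = A ∧ legZ μ x + 1 = B).card : ℤ)
    = ({x : ℕ × ℕ | -armZ μ x - 1 = A ∧ -legZ η x = B}.ncard : ℤ)
      - ({x : ℕ × ℕ | -armZ ⊥ x - 1 = A ∧ -legZ ⊥ x = B}.ncard : ℤ) := by
  set N : ℕ := μ.rowLen 0 + μ.colLen 0 + η.rowLen 0 + η.colLen 0 + A.natAbs + B.natAbs + 2
    with hN
  have harm : ∀ x : ℕ × ℕ, (-armZ μ x - 1 = A) ↔ ((x.2 : ℤ) = (μ.rowLen x.1 : ℤ) + A) := by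
    intro x; unfold armZ; omega
  have hlegη : ∀ x : ℕ × ℕ, (-legZ η x = B) ↔ ((x.1 : ℤ) + 1 = (η.colLen x.2 : ℤ) + B) := by
    intro x; unfold legZ; omega
  have harmb : ∀ x : ℕ × ℕ, (-armZ ⊥ x - 1 = A) ↔ ((x.2 : ℤ) = A) := by
    intro x; unfold armZ; rw [rowLen_bot' x.1]; omega
  have hlegb : ∀ x : ℕ × ℕ, (-legZ ⊥ x = B) ↔ ((x.1 : ℤ) + 1 = B) := by
    intro x; unfold legZ; rw [colLen_bot' x.2]; omega
  have hrμ : ∀ i, μ.rowLen i ≤ μ.rowLen 0 := fun i => μ.rowLen_anti 0 i (Nat.zero_le _)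
  have hcμ : ∀ j, μ.colLen j ≤ μ.colLen 0 := fun j => μ.colLen_anti 0 j (Nat.zero_le _)
  have hrη : ∀ i, η.rowLen i ≤ η.rowLen 0 := fun i => η.rowLen_anti 0 i (Nat.zero_le _)
  have hcη : ∀ j, η.colLen j ≤ η.colLen 0 := fun j => η.colLen_anti 0 j (Nat.zero_le _)
  set F1 : Finset (ℕ × ℕ) := (Finset.range N ×ˢ Finset.range N).filter
      (fun x => -armZ μ x - 1 = A ∧ -legZ η x = B) with hF1
  set F2 : Finset (ℕ × ℕ) := (Finset.range N ×ˢ Finset.range N).filter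
      (fun x => -armZ ⊥ x - 1 = A ∧ -legZ ⊥ x = B) with hF2
  have hS1 : {x : ℕ × ℕ | -armZ μ x - 1 = A ∧ -legZ η x = B} = ↑F1 := by
    ext x
    rw [hF1]
    simp only [Finset.coe_filter, Finset.mem_product, Finset.mem_range, Set.mem_setOf_eq]
    constructor
    · intro h
      refine ⟨⟨?_, ?_⟩, h⟩
      · have h2 := (hlegη x).1 h.2
        have := hcη x.2
        omega
      · have h1 := (harm x).1 h.1
        have := hrμ x.1
        omega
    · exact fun h => h.2
  have hS2 : {x : ℕ × ℕ | -armZ ⊥ x - 1 = A ∧ -legZ ⊥ x = B} = ↑F2 := by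
    ext x
    rw [hF2]
    simp only [Finset.coe_filter, Finset.mem_product, Finset.mem_range, Set.mem_setOf_eq]
    constructor
    · intro h
      have h1 := (harmb x).1 h.1
      have h2 := (hlegb x).1 h.2
      exact ⟨⟨by omega, by omega⟩, h⟩
    · exact fun h => h.2
  have hF2card : (F2.card : ℤ) = if 0 ≤ A ∧ 1 ≤ B then 1 else 0 := by
    by_cases hAB : 0 ≤ A ∧ 1 ≤ B
    · rw [if_pos hAB]
      have hset : F2 = {((B - 1).toNat, A.toNat)} := by
        ext x
        rw [hF2]
        simp only [Finset.mem_filter, Finset.mem_product, Finset.mem_range,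
          Finset.mem_singleton, harmb x, hlegb x, Prod.ext_iff]
        omega
      rw [hset, Finset.card_singleton, Nat.cast_one]
    · rw [if_neg hAB]
      have hset : F2 = ∅ := by
        apply Finset.eq_empty_of_forall_notMem
        intro x hx
        rw [hF2, Finset.mem_filter] at hx
        have h1 := (harmb x).1 hx.2.1
        have h2 := (hlegb x).1 hx.2.2
        exact hAB ⟨by omega, by omega⟩
      rw [hset, Finset.card_empty, Nat.cast_zero]
  refine ⟨by rw [hS1]; exact F1.finite_toSet, by rw [hS2]; exact F2.finite_toSet, ?_⟩
  rw [hS1, hS2, Set.ncard_coe_finset, Set.ncard_coe_finset]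
  rcases lt_or_ge A 0 with hA | hA
  · -- A < 0
    have hMf : F1 = μ.cells.filter (fun x => -armZ μ x - 1 = A ∧ -legZ η x = B) := by
      ext x
      rw [hF1]
      simp only [Finset.mem_filter, Finset.mem_product, Finset.mem_range,
        YoungDiagram.mem_cells]
      constructor
      · rintro ⟨-, h⟩
        refine ⟨?_, h⟩
        have h1 := (harm x).1 h.1
        exact YoungDiagram.mem_iff_lt_rowLen.2 (by omega)
      · rintro ⟨hx, h⟩
        have h1 : x.2 < μ.rowLen x.1 := YoungDiagram.mem_iff_lt_rowLen.1 hx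
        have h2 : x.1 < μ.colLen x.2 := YoungDiagram.mem_iff_lt_colLen.1 hx
        have := hrμ x.1
        have := hcμ x.2
        exact ⟨⟨by omega, by omega⟩, h⟩
    have hNf : η.cells.filter (fun x => armZ η x = A ∧ legZ μ x + 1 = B) = ∅ := by
      apply Finset.eq_empty_of_forall_notMem
      intro x hx
      rw [Finset.mem_filter, YoungDiagram.mem_cells] at hx
      have h1 : x.2 < η.rowLen x.1 := YoungDiagram.mem_iff_lt_rowLen.1 hx.1
      have h2 := hx.2.1
      unfold armZ at h2
      omega
    rw [hNf, ← hMf, hF2card, if_neg (by rintro ⟨h, -⟩; omega), Finset.card_empty]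
    push_cast
    ring
  · -- 0 ≤ A
    set A' : ℕ := A.toNat with hA'def
    have hA' : (A' : ℤ) = A := Int.toNat_of_nonneg hA
    have hMf : μ.cells.filter (fun x => -armZ μ x - 1 = A ∧ -legZ η x = B) = ∅ := by
      apply Finset.eq_empty_of_forall_notMem
      intro x hx
      rw [Finset.mem_filter, YoungDiagram.mem_cells] at hx
      have h1 : x.2 < μ.rowLen x.1 := YoungDiagram.mem_iff_lt_rowLen.1 hx.1
      have h2 := hx.2.1
      unfold armZ at h2
      omega
    have hiff : ∀ i m : ℕ, m < η.colLen (μ.rowLen i + A') ↔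
        ((A' + 1 ≤ η.rowLen m) ∧ μ.colLen (η.rowLen m - (A' + 1)) ≤ i) := by
      intro i m
      have key : m < η.colLen (μ.rowLen i + A') ↔ μ.rowLen i + A' < η.rowLen m := by
        constructor
        · intro h
          exact YoungDiagram.mem_iff_lt_rowLen.1 (YoungDiagram.mem_iff_lt_colLen.2 h)
        · intro h
          exact YoungDiagram.mem_iff_lt_colLen.1 (YoungDiagram.mem_iff_lt_rowLen.2 h)
      rw [key]
      constructor
      · intro h
        refine ⟨by omega, ?_⟩
        by_contra hcon
        push_neg at hcon
        have := YoungDiagram.mem_iff_lt_rowLen.1 (YoungDiagram.mem_iff_lt_colLen.2 hcon)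
        omega
      · rintro ⟨hPm, hge⟩
        have hnm : ¬ ((i, η.rowLen m - (A' + 1)) ∈ μ) := by
          rw [YoungDiagram.mem_iff_lt_colLen]; omega
        rw [YoungDiagram.mem_iff_lt_rowLen] at hnm
        omega
    have hcN : ∀ i, η.colLen (μ.rowLen i + A') < N := by
      intro i
      have := hcη (μ.rowLen i + A')
      omega
    have hBN : B < (N : ℤ) := by omega
    have hmN : ∀ m : ℕ, (A' + 1 ≤ η.rowLen m) → (m : ℤ) + B < (N : ℤ) := by
      intro m hm
      have hm0 : (m, 0) ∈ η := YoungDiagram.mem_iff_lt_rowLen.2 (by omega)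
      have := YoungDiagram.mem_iff_lt_colLen.1 hm0
      have := hcη 0
      omega
    have hcore :
        (((Finset.range N).filter
            (fun i : ℕ => (i : ℤ) + 1 - (η.colLen (μ.rowLen i + A') : ℤ) = B)).card : ℤ)
          - (if 1 ≤ B then 1 else 0)
        = (((Finset.range N).filter
            (fun m : ℕ => (A' + 1 ≤ η.rowLen m) ∧
              (μ.colLen (η.rowLen m - (A' + 1)) : ℤ) = (m : ℤ) + B)).card : ℤ) :=
      core_count N B (fun i => η.colLen (μ.rowLen i + A'))
        (fun m => μ.colLen (η.rowLen m - (A' + 1)))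
        (fun m => A' + 1 ≤ η.rowLen m) hiff hcN hBN hmN
    have hE1 : F1.card = ((Finset.range N).filter
        (fun i : ℕ => (i : ℤ) + 1 - (η.colLen (μ.rowLen i + A') : ℤ) = B)).card := by
      apply Finset.card_bij' (fun x _ => x.1) (fun i _ => (i, μ.rowLen i + A'))
      · intro x hx
        rw [hF1, Finset.mem_filter, Finset.mem_product, Finset.mem_range, Finset.mem_range] at hx
        obtain ⟨⟨hx1, hx2⟩, h1, h2⟩ := hx
        rw [Finset.mem_filter, Finset.mem_range]
        refine ⟨hx1, ?_⟩
        have h1' := (harm x).1 h1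
        have h2' := (hlegη x).1 h2
        have hx2' : x.2 = μ.rowLen x.1 + A' := by omega
        rw [← hx2']
        omega
      · intro i hi
        rw [Finset.mem_filter, Finset.mem_range] at hi
        obtain ⟨hiN, hcond⟩ := hi
        rw [hF1, Finset.mem_filter, Finset.mem_product, Finset.mem_range, Finset.mem_range]
        have hb : μ.rowLen i + A' < N := by
          have := hrμ i
          omega
        refine ⟨⟨hiN, hb⟩, ?_, ?_⟩
        · rw [harm (i, μ.rowLen i + A')]
          show ((μ.rowLen i + A' : ℕ) : ℤ) = (μ.rowLen i : ℤ) + A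
          omega
        · rw [hlegη (i, μ.rowLen i + A')]
          show (i : ℤ) + 1 = (η.colLen (μ.rowLen i + A') : ℤ) + B
          omega
      · intro x hx
        rw [hF1, Finset.mem_filter] at hx
        obtain ⟨-, h1, -⟩ := hx
        have h1' := (harm x).1 h1
        have hx2' : μ.rowLen x.1 + A' = x.2 := by omega
        rw [hx2']
      · intro i hi
        rfl
    have hE2 : (η.cells.filter (fun x => armZ η x = A ∧ legZ μ x + 1 = B)).card
        = ((Finset.range N).filter
            (fun m : ℕ => (A' + 1 ≤ η.rowLen m) ∧
              (μ.colLen (η.rowLen m - (A' + 1)) : ℤ) = (m : ℤ) + B)).card := by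
      apply Finset.card_bij' (fun x _ => x.1) (fun m _ => (m, η.rowLen m - (A' + 1)))
      · intro x hx
        rw [Finset.mem_filter, YoungDiagram.mem_cells] at hx
        obtain ⟨hxη, h1, h2⟩ := hx
        have hr : x.2 < η.rowLen x.1 := YoungDiagram.mem_iff_lt_rowLen.1 hxη
        have hco : x.1 < η.colLen x.2 := YoungDiagram.mem_iff_lt_colLen.1 hxη
        have hcol := hcη x.2
        unfold armZ at h1
        unfold legZ at h2
        rw [Finset.mem_filter, Finset.mem_range]
        refine ⟨by omega, by omega, ?_⟩
        have hx2 : η.rowLen x.1 - (A' + 1) = x.2 := by omega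
        rw [hx2]
        omega
      · intro m hm
        rw [Finset.mem_filter, Finset.mem_range] at hm
        obtain ⟨hmN', hPm, hg⟩ := hm
        rw [Finset.mem_filter, YoungDiagram.mem_cells]
        have hmem : (m, η.rowLen m - (A' + 1)) ∈ η :=
          YoungDiagram.mem_iff_lt_rowLen.2 (by omega)
        refine ⟨hmem, ?_, ?_⟩
        · show (η.rowLen m : ℤ) - (((η.rowLen m - (A' + 1) : ℕ) : ℤ) + 1) = A
          omega
        · show (μ.colLen (η.rowLen m - (A' + 1)) : ℤ) - ((m : ℤ) + 1) + 1 = B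
          omega
      · intro x hx
        rw [Finset.mem_filter, YoungDiagram.mem_cells] at hx
        obtain ⟨hxη, h1, -⟩ := hx
        have hr : x.2 < η.rowLen x.1 := YoungDiagram.mem_iff_lt_rowLen.1 hxη
        unfold armZ at h1
        have hx2 : η.rowLen x.1 - (A' + 1) = x.2 := by omega
        rw [hx2]
      · intro m hm
        rfl
    have hif : (if 0 ≤ A ∧ 1 ≤ B then (1 : ℤ) else 0) = if 1 ≤ B then 1 else 0 := by
      by_cases hB : 1 ≤ B
      · rw [if_pos ⟨hA, hB⟩, if_pos hB]
      · rw [if_neg (fun h => hB h.2), if_neg hB]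
    rw [hMf, hE2, hF2card, hif, hE1, Finset.card_empty]
    push_cast
    omega
end

section
/- Let μ and η be partitions and let k, u, v be formal variables. Then M(k u^{−1}; u, v) · ∏_{(n,m)∈ℤ_{>0}²} (1 − k u^{−a_μ(n,m)−1} v^{−l_η(n,m)}) = ∏_{x∈μ} (1 − k u^{−a_μ(x)−1} v^{−l_η(x)}) · ∏_{z∈η} (1 − k u^{a_η(z)} v^{l_μ(z)+1}), where M(k u^{−1}; u, v) = ∏_{n,m>0}(1 − k u^{n−1} v^{m})^{−1}. Both sides are formal power series in k; for each d ≥ 0 the coefficient of k^d on the left is a well-defined formal Laurent sum in u, v (each monomial u^A v^B occurring with a finite integer coefficient, and with exponents bounded below: A ≥ −d·μ_1, B ≥ −d·η'_1), and the identity asserts equality of all these coefficients. In particular the left-hand side is a polynomial in k. -/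
/-- Exponent `(n−1, m)` of the MacMahon factor `(1 − k u^{n−1} v^m)⁻¹`, `x = (n−1, m−1)`. -/
def wMac (x : ℕ × ℕ) : ℤ × ℤ := ((x.1 : ℤ), (x.2 : ℤ) + 1)

/-- Exponent `(−a_μ(x)−1, −l_η(x))` of the factor attached to `x ∈ ℤ_{>0}²`. -/
def wLeft (μ η : YoungDiagram) (x : ℕ × ℕ) : ℤ × ℤ := (-armZ μ x - 1, -legZ η x)

/-- Exponent `(a_η(x), l_μ(x)+1)` of the factor attached to a cell `x ∈ η`. -/
def wRight (μ η : YoungDiagram) (x : ℕ × ℕ) : ℤ × ℤ := (armZ η x, legZ μ x + 1)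

/-- The index set for the coefficient of `k^{d₁+d₂} u^A v^B` on the left-hand side:
multisets of size `d₁` of MacMahon indices together with `d₂`-element subsets of
`ℤ_{>0}²`, of total exponent `(A,B)`. -/
def pairSet (μ η : YoungDiagram) (d₁ d₂ : ℕ) (A B : ℤ) :
    Set (Multiset (ℕ × ℕ) × Finset (ℕ × ℕ)) :=
  {p | Multiset.card p.1 = d₁ ∧ p.2.card = d₂ ∧
    (p.1.map wMac).sum + ∑ x ∈ p.2, wLeft μ η x = (A, B)}

/-- Coefficient of `k^d u^A v^B` in
`M(k u⁻¹; u, v) · ∏_{(n,m)∈ℤ_{>0}²} (1 − k u^{−a_μ(n,m)−1} v^{−l_η(n,m)})`. -/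
noncomputable def lhsCoeff (μ η : YoungDiagram) (d : ℕ) (A B : ℤ) : ℤ :=
  ∑ d₂ ∈ Finset.range (d + 1), (-1 : ℤ) ^ d₂ * (pairSet μ η (d - d₂) d₂ A B).ncard

/-- Coefficient of `k^d u^A v^B` in
`∏_{x∈μ} (1 − k u^{−a_μ(x)−1} v^{−l_η(x)}) · ∏_{z∈η} (1 − k u^{a_η(z)} v^{l_μ(z)+1})`. -/
def rhsCoeff (μ η : YoungDiagram) (d : ℕ) (A B : ℤ) : ℤ :=
  (-1 : ℤ) ^ d *
    ((μ.cells.powerset ×ˢ η.cells.powerset).filter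
      (fun p => p.1.card + p.2.card = d ∧
        (∑ x ∈ p.1, wLeft μ η x) + (∑ x ∈ p.2, wRight μ η x) = (A, B))).card

/-!
Give each cell a weight in `ℤ × ℤ` (the exponent of `u, v` in its factor). The heart of the
matter is that the weights `wLeft` of the cells outside `μ` are, with multiplicity, exactly the
MacMahon weights together with the weights `wRight` of the cells of `η` (`ncard_wLeft_fiber`):
for a fixed first coordinate this is a crossing count for a walk with unit up-steps. Hence
`ℤ²_{>0}` is in weight-preserving bijection with `ℤ²_{>0} ⊔ μ ⊔ η`, which turns the left-hand
side into `H · E · E_μ · E_η`, where `H` and `E` are the complete and elementary products over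
the MacMahon weights. Finally `H · E = 1`: moving one element of `m + f` between the multiset `m`
and the set `f` is a sign-reversing involution without fixed points other than `m = 0, f = ∅`.
-/

open Finset

theorem sum_range_indicator_telescope (s : ℕ → ℤ) (hs : ∀ T, s (T + 1) ≤ s T + 1) (b : ℤ)
    (M : ℕ) :
    ∑ T ∈ range M, ((if s (T + 1) = b then 1 else 0) -
        (if s (T + 1) ≤ b ∧ b ≤ s T then 1 else 0) : ℤ) =
      (if b ≤ s M then 1 else 0) - (if b ≤ s 0 then 1 else 0) := by
  rw [← sum_range_sub (fun T => if b ≤ s T then (1 : ℤ) else 0)]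
  refine sum_congr rfl fun T _ => ?_
  have := hs T
  split_ifs <;> omega

/-- The height at time `T` of the walk that, at each time `t`, first steps down once for every
`r < N` with `G r = t` and then steps up once. -/
def walkHeight (G : ℕ → ℕ) (N T : ℕ) : ℤ := T - #{r ∈ range N | G r < T}

theorem walkHeight_succ_le (G : ℕ → ℕ) (N T : ℕ) :
    walkHeight G N (T + 1) ≤ walkHeight G N T + 1 := by
  have : #{r ∈ range N | G r < T} ≤ #{r ∈ range N | G r < T + 1} :=
    card_le_card fun r hr => by
      simp only [mem_filter] at hr ⊢
      exact ⟨hr.1, by omega⟩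
  simp only [walkHeight]
  push_cast
  omega

section Walk

variable {F G : ℕ → ℕ} {N : ℕ} (hGF : ∀ r < N, ∀ i, G r ≤ i ↔ r < F i) (hF : ∀ i, F i ≤ N)
include hGF hF

theorem card_filter_lt_succ (T : ℕ) : #{r ∈ range N | G r < T + 1} = F T := by
  suffices {r ∈ range N | G r < T + 1} = range (F T) by rw [this, card_range]
  ext r
  simp only [mem_filter, mem_range, Nat.lt_succ_iff]
  have := hF T
  exact ⟨fun ⟨hr, h⟩ => (hGF r hr T).mp h, fun h => ⟨by omega, (hGF r (by omega) T).mpr h⟩⟩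

theorem walkHeight_succ (T : ℕ) : walkHeight G N (T + 1) = T + 1 - F T := by
  rw [walkHeight, card_filter_lt_succ hGF hF]
  push_cast
  ring

theorem lt_iff_lt_card_filter {r : ℕ} (hr : r < N) (T : ℕ) :
    G r < T ↔ r < #{r ∈ range N | G r < T} := by
  cases T with
  | zero => simp
  | succ T => rw [card_filter_lt_succ hGF hF, Nat.lt_succ_iff, hGF r hr]

/-- The down-step of `r` starts at height `G r - r`; those at time `T` start at the heights from
`walkHeight G N T` down to `walkHeight G N (T + 1)`. -/
theorem card_filter_sub_eq_of_eq (b : ℤ) (T : ℕ) :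
    #{r ∈ range N | (G r : ℤ) - r = b ∧ G r = T} =
      if walkHeight G N (T + 1) ≤ b ∧ b ≤ walkHeight G N T then 1 else 0 := by
  rw [walkHeight_succ hGF hF]
  split_ifs with h
  · rw [card_eq_one]
    refine ⟨(T - b).toNat, ext fun r => ?_⟩
    simp only [walkHeight, mem_filter, mem_range, mem_singleton] at h ⊢
    refine ⟨fun ⟨_, hb, hT⟩ => by omega, ?_⟩
    rintro rfl
    have hr : (T - b).toNat < F T := by omega
    have := (hGF _ (hr.trans_le (hF T)) T).mpr hr
    have := (lt_iff_lt_card_filter hGF hF (hr.trans_le (hF T)) T).not.mpr (by omega)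
    exact ⟨hr.trans_le (hF T), by omega, by omega⟩
  · refine card_eq_zero.mpr <| filter_eq_empty_iff.mpr fun r hr ⟨hb, hT⟩ => h ?_
    subst hT
    have hr := mem_range.mp hr
    have := (hGF r hr (G r)).mp le_rfl
    have := (lt_iff_lt_card_filter hGF hF hr (G r)).not.mp (lt_irrefl _)
    simp only [walkHeight]
    omega

/-- Up-steps of the walk ending at height `b` against down-steps starting there: a walk from `0`
to a great height crosses between `b - 1` and `b` once more upwards than downwards iff `b ≥ 1`. -/
theorem ncard_setOf_add_one_sub_eq (b : ℤ) :
    {i : ℕ | (i : ℤ) + 1 - F i = b}.ncard =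
      (if 1 ≤ b then 1 else 0) + {r : ℕ | r < N ∧ (G r : ℤ) - r = b}.ncard := by
  set M := N + b.toNat + 1
  have hMdef : (M : ℤ) = N + b.toNat + 1 := by simp only [M]; push_cast; ring
  have hb := Int.self_le_toNat b
  have hleft : {i : ℕ | (i : ℤ) + 1 - F i = b} = ↑{T ∈ range M | walkHeight G N (T + 1) = b} := by
    ext i
    simp only [Set.mem_ofPred_eq, coe_filter, mem_range, walkHeight_succ hGF hF]
    have := hF i
    omega
  have hright : {r : ℕ | r < N ∧ (G r : ℤ) - r = b} =
      ↑{r ∈ range N | (G r : ℤ) - r = b} := by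
    ext r
    simp
  have hfiber : #{r ∈ range N | (G r : ℤ) - r = b} =
      ∑ T ∈ range M, #{r ∈ range N | (G r : ℤ) - r = b ∧ G r = T} := by
    simp_rw [← filter_filter]
    exact card_eq_sum_card_fiberwise fun r hr => by
      rw [mem_coe, mem_filter, mem_range] at hr
      rw [mem_coe, mem_range]
      omega
  have hM : b ≤ walkHeight G N M := by
    have : #{r ∈ range N | G r < M} ≤ N := (card_filter_le _ _).trans_eq (card_range N)
    simp only [walkHeight]
    omega
  have htel := sum_range_indicator_telescope _ (walkHeight_succ_le G N) b M
  rw [sum_sub_distrib, if_pos hM, show walkHeight G N 0 = 0 by simp [walkHeight]] at htel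
  rw [hleft, hright, Set.ncard_coe_finset, Set.ncard_coe_finset, card_filter, hfiber]
  rw [sum_congr rfl fun T _ => card_filter_sub_eq_of_eq hGF hF b T]
  zify
  split_ifs at htel ⊢ <;> omega

end Walk

theorem Multiset.le_sum_sub_card_nsmul {M : Type*} [AddCommGroup M] [PartialOrder M]
    [IsOrderedAddMonoid M] {s : Multiset M} {a : M} (ha : a ≤ 0) (h : ∀ x ∈ s, a ≤ x)
    {x : M} (hx : x ∈ s) : x ≤ s.sum - Multiset.card s • a := by
  obtain ⟨t, rfl⟩ := Multiset.exists_cons_of_mem hx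
  have ht : Multiset.card t • a ≤ t.sum :=
    Multiset.card_nsmul_le_sum fun y hy => h y (Multiset.mem_cons_of_mem hy)
  rw [Multiset.sum_cons, Multiset.card_cons, succ_nsmul]
  calc x = x + t.sum - t.sum := by abel
    _ ≤ x + t.sum - (Multiset.card t • a + a) := sub_le_sub_left (by simpa using add_le_add ht ha) _

theorem Multiset.finite_setOf_card_le {α : Type*} {s : Set α} (hs : s.Finite) (n : ℕ) :
    {m : Multiset α | Multiset.card m ≤ n ∧ ∀ a ∈ m, a ∈ s}.Finite := by
  classical
  refine ((n • hs.toFinset.val).powerset.toFinset.finite_toSet).subset fun m ⟨hcard, hmem⟩ => ?_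
  simp only [Finset.mem_coe, Multiset.mem_toFinset, Multiset.mem_powerset, Multiset.le_iff_count,
    Multiset.count_nsmul]
  intro a
  by_cases ha : a ∈ m
  · rw [Multiset.count_eq_one_of_mem hs.toFinset.nodup (by simpa using hmem a ha), mul_one]
    exact (Multiset.count_le_card a m).trans hcard
  · simp [Multiset.count_eq_zero_of_notMem ha]

theorem exists_equiv_comp_eq_of_card_fiber_eq {α β γ : Type*} {f : α → γ} {g : β → γ}
    (hf : ∀ c, Finite {a // f a = c}) (hg : ∀ c, Finite {b // g b = c})
    (h : ∀ c, Nat.card {a // f a = c} = Nat.card {b // g b = c}) :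
    ∃ e : α ≃ β, ∀ a, g (e a) = f a :=
  ⟨.ofFiberEquiv fun c => (@Finite.card_eq _ _ (hf c) (hg c)).mp (h c) |>.some,
    Equiv.ofFiberEquiv_map _⟩

def Equiv.prodFinsetSplit {A X Y Z : Type*} (Ψ : X ≃ Y ⊕ Z) :
    A × Finset X ≃ (A × Finset Y) × Finset Z :=
  ((Equiv.refl A).prodCongr (Ψ.finsetCongr.trans Finset.sumEquiv.toEquiv)).trans
    (Equiv.prodAssoc _ _ _).symm

theorem Equiv.prodFinsetSplit_apply {A X Y Z : Type*} (Ψ : X ≃ Y ⊕ Z) (a : A) (e : Finset X) :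
    prodFinsetSplit Ψ (a, e) =
      ((a, (e.map Ψ.toEmbedding).toLeft), (e.map Ψ.toEmbedding).toRight) :=
  rfl

theorem Equiv.prodFinsetSplit_symm_apply {A X Y Z : Type*} (Ψ : X ≃ Y ⊕ Z) (a : A)
    (f : Finset Y) (b : Finset Z) :
    (prodFinsetSplit Ψ).symm ((a, f), b) = (a, (f.disjSum b).map Ψ.symm.toEmbedding) :=
  rfl

theorem Equiv.card_prodFinsetSplit {A X Y Z : Type*} (Ψ : X ≃ Y ⊕ Z) (p : A × Finset X) :
    (prodFinsetSplit Ψ p).1.2.card + (prodFinsetSplit Ψ p).2.card = p.2.card := by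
  rw [prodFinsetSplit_apply, card_toLeft_add_card_toRight, card_map]

namespace Multiset

theorem mem_of_toList_head?_eq_some {α : Type*} {s : Multiset α} {y : α}
    (h : s.toList.head? = some y) : y ∈ s :=
  mem_toList.mp (List.mem_of_mem_head? h)

variable {α : Type*} [DecidableEq α]

def toggle (y : α) (p : Multiset α × Finset α) : Multiset α × Finset α :=
  if y ∈ p.2 then (y ::ₘ p.1, p.2.erase y) else (p.1.erase y, insert y p.2)

variable {y : α} {p : Multiset α × Finset α}

theorem toggle_of_mem (h : y ∈ p.2) : toggle y p = (y ::ₘ p.1, p.2.erase y) := if_pos h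

theorem toggle_of_notMem (h : y ∉ p.2) : toggle y p = (p.1.erase y, insert y p.2) := if_neg h

theorem toggle_total (hy : y ∈ p.1 + p.2.val) :
    (toggle y p).1 + (toggle y p).2.val = p.1 + p.2.val := by
  by_cases h : y ∈ p.2
  · rw [toggle_of_mem h, cons_add, ← add_cons, Finset.erase_val, cons_erase h]
  · have hm : y ∈ p.1 := (mem_add.mp hy).resolve_right h
    rw [toggle_of_notMem h, Finset.insert_val_of_notMem h, add_cons, ← cons_add, cons_erase hm]

theorem toggle_toggle (hy : y ∈ p.1 + p.2.val) : toggle y (toggle y p) = p := by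
  by_cases h : y ∈ p.2
  · rw [toggle_of_mem h, toggle_of_notMem (Finset.notMem_erase y _), erase_cons_head,
      Finset.insert_erase h]
  · have hm : y ∈ p.1 := (mem_add.mp hy).resolve_right h
    rw [toggle_of_notMem h, toggle_of_mem (Finset.mem_insert_self y _), cons_erase hm,
      Finset.erase_insert h]

theorem neg_one_pow_card_toggle {R : Type*} [Ring R] :
    (-1 : R) ^ (toggle y p).2.card = -(-1) ^ p.2.card := by
  by_cases h : y ∈ p.2
  · rw [toggle_of_mem h, ← Finset.card_erase_add_one h, pow_succ, mul_neg_one, neg_neg]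
  · rw [toggle_of_notMem h, Finset.card_insert_of_notMem h, pow_succ, mul_neg_one]

/-- `toList` depends only on the multiset `m + f`, which `toggle` preserves, so this is an
involution. -/
noncomputable def exchange (p : Multiset α × Finset α) : Multiset α × Finset α :=
  (p.1 + p.2.val).toList.head?.elim p (toggle · p)

theorem exchange_of_head?_eq_none (h : (p.1 + p.2.val).toList.head? = none) :
    exchange p = p := by
  simp [exchange, h]

theorem exchange_of_head?_eq_some (h : (p.1 + p.2.val).toList.head? = some y) :
    exchange p = toggle y p := by
  simp [exchange, h]

theorem exchange_total (p : Multiset α × Finset α) :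
    (exchange p).1 + (exchange p).2.val = p.1 + p.2.val := by
  rcases h : (p.1 + p.2.val).toList.head? with _ | y
  · rw [exchange_of_head?_eq_none h]
  · rw [exchange_of_head?_eq_some h, toggle_total (mem_of_toList_head?_eq_some h)]

theorem exchange_exchange (p : Multiset α × Finset α) : exchange (exchange p) = p := by
  rcases h : (p.1 + p.2.val).toList.head? with _ | y
  · rw [exchange_of_head?_eq_none h, exchange_of_head?_eq_none h]
  · have h' := exchange_total p ▸ h
    rw [exchange_of_head?_eq_some h] at h' ⊢
    rw [exchange_of_head?_eq_some h', toggle_toggle (mem_of_toList_head?_eq_some h)]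

theorem neg_one_pow_card_exchange {R : Type*} [Ring R] (hp : p ≠ (0, ∅)) :
    (-1 : R) ^ (exchange p).2.card = -(-1) ^ p.2.card := by
  rcases h : (p.1 + p.2.val).toList.head? with _ | y
  · simp only [List.head?_eq_none_iff, toList_eq_nil, add_eq_zero, Finset.val_eq_zero] at h
    exact absurd (Prod.ext h.1 h.2) hp
  · rw [exchange_of_head?_eq_some h, neg_one_pow_card_toggle]

theorem exchange_ne_self (hp : p ≠ (0, ∅)) : exchange p ≠ p := fun h => by
  have := neg_one_pow_card_exchange (R := ℤ) hp
  rw [h] at this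
  have : (-1 : ℤ) ^ p.2.card = 0 := by linarith
  simp at this

theorem exchange_eq_zero_empty_iff : exchange p = (0, ∅) ↔ p = (0, ∅) := by
  have h0 : exchange ((0 : Multiset α), (∅ : Finset α)) = (0, ∅) :=
    exchange_of_head?_eq_none (by simp)
  refine ⟨fun h => ?_, fun h => h ▸ h0⟩
  rw [← exchange_exchange p, h, h0]

end Multiset

theorem Finset.sum_neg_one_pow_card_mul_eq_sum_filter {α β R : Type*} [DecidableEq α]
    [CommRing R] (S : Finset ((Multiset α × Finset α) × β)) (P : Multiset α → β → Prop)
    (hS : ∀ q, q ∈ S ↔ P (q.1.1 + q.1.2.val) q.2) (g : β → R) :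
    ∑ q ∈ S, (-1) ^ q.1.2.card * g q.2 = ∑ q ∈ S with q.1 = (0, ∅), g q.2 := by
  rw [← sum_filter_add_sum_filter_not S (·.1 = (0, ∅))]
  have hfixed : ∑ q ∈ S with q.1 = (0, ∅), (-1) ^ q.1.2.card * g q.2 =
      ∑ q ∈ S with q.1 = (0, ∅), g q.2 :=
    sum_congr rfl fun q hq => by simp [(mem_filter.mp hq).2]
  have hmoving : ∑ q ∈ S with ¬q.1 = (0, ∅), (-1) ^ q.1.2.card * g q.2 = 0 := by
    refine sum_involution (fun q _ => (Multiset.exchange q.1, q.2)) (fun q hq => ?_)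
      (fun q hq _ h => Multiset.exchange_ne_self (mem_filter.mp hq).2 (congrArg Prod.fst h))
      (fun q hq => ?_) (fun q _ => by simp [Multiset.exchange_exchange])
    · rw [Multiset.neg_one_pow_card_exchange (mem_filter.mp hq).2]
      ring
    · obtain ⟨hqS, hq0⟩ := mem_filter.mp hq
      refine mem_filter.mpr ⟨(hS _).mpr ?_, mt Multiset.exchange_eq_zero_empty_iff.mp hq0⟩
      rw [Multiset.exchange_total]
      exact (hS q).mp hqS
  rw [hfixed, hmoving, add_zero]

namespace YoungDiagram

variable (μ η : YoungDiagram)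

theorem wLeft_mk (i j : ℕ) :
    wLeft μ η (i, j) = ((j : ℤ) - μ.rowLen i, (i : ℤ) + 1 - η.colLen j) := by
  simp only [wLeft, armZ, legZ, Prod.mk.injEq]
  constructor <;> ring

theorem wRight_mk (i j : ℕ) :
    wRight μ η (i, j) = ((η.rowLen i : ℤ) - j - 1, (μ.colLen j : ℤ) - i) := by
  simp only [wRight, armZ, legZ, Prod.mk.injEq]
  constructor <;> ring

theorem ncard_wMac_fiber (n : ℕ) (b : ℤ) :
    {y | wMac y = ((n : ℤ), b)}.ncard = if 1 ≤ b then 1 else 0 := by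
  split_ifs with hb
  · rw [Set.ncard_eq_one]
    refine ⟨(n, (b - 1).toNat), Set.ext fun ⟨i, j⟩ => ?_⟩
    simp only [wMac, Set.mem_ofPred_eq, Set.mem_singleton_iff, Prod.mk.injEq]
    omega
  · convert Set.ncard_empty (ℕ × ℕ)
    refine Set.eq_empty_of_forall_notMem fun ⟨i, j⟩ hw => ?_
    simp only [wMac, Set.mem_ofPred_eq, Prod.mk.injEq] at hw
    omega

variable {μ η} in
theorem fst_wLeft_nonneg {x : ℕ × ℕ} (hx : x ∉ μ) : 0 ≤ (wLeft μ η x).1 := by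
  obtain ⟨i, j⟩ := x
  rw [mem_iff_lt_rowLen, not_lt] at hx
  rw [wLeft_mk]
  omega

variable {μ η} in
theorem fst_wRight_nonneg {z : ℕ × ℕ} (hz : z ∈ η) : 0 ≤ (wRight μ η z).1 := by
  obtain ⟨i, j⟩ := z
  rw [mem_iff_lt_rowLen] at hz
  rw [wRight_mk]
  omega

theorem colLen_le_iff_lt_colLen {n r : ℕ} (hr : r < η.colLen n) (i : ℕ) :
    μ.colLen (η.rowLen r - 1 - n) ≤ i ↔ r < η.colLen (μ.rowLen i + n) := by
  rw [← mem_iff_lt_colLen, mem_iff_lt_rowLen] at hr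
  rw [← not_lt, ← mem_iff_lt_colLen, mem_iff_lt_rowLen, ← mem_iff_lt_colLen, mem_iff_lt_rowLen]
  omega

theorem setOf_wLeft_eq_image (n : ℕ) (b : ℤ) :
    {x | x ∉ μ ∧ wLeft μ η x = ((n : ℤ), b)} =
      (fun i => (i, μ.rowLen i + n)) '' {i | (i : ℤ) + 1 - η.colLen (μ.rowLen i + n) = b} := by
  ext ⟨i, j⟩
  simp only [Set.mem_ofPred_eq, Set.mem_image, mem_iff_lt_rowLen, not_lt, wLeft_mk,
    Prod.mk.injEq]
  constructor
  · rintro ⟨hj, h1, h2⟩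
    refine ⟨i, ?_, rfl, by omega⟩
    rwa [show μ.rowLen i + n = j by omega]
  · rintro ⟨i, h, rfl, rfl⟩
    exact ⟨by omega, by push_cast; ring, h⟩

theorem setOf_wRight_eq_image (n : ℕ) (b : ℤ) :
    {z | z ∈ η ∧ wRight μ η z = ((n : ℤ), b)} =
      (fun r => (r, η.rowLen r - 1 - n)) ''
        {r | r < η.colLen n ∧ (μ.colLen (η.rowLen r - 1 - n) : ℤ) - r = b} := by
  ext ⟨r, j⟩
  simp only [Set.mem_ofPred_eq, Set.mem_image, wRight_mk, Prod.mk.injEq]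
  constructor
  · rintro ⟨hz, h1, h2⟩
    rw [mem_iff_lt_rowLen] at hz
    have hj : η.rowLen r - 1 - n = j := by omega
    refine ⟨r, ⟨?_, by rwa [hj]⟩, rfl, hj⟩
    rw [← mem_iff_lt_colLen, mem_iff_lt_rowLen]
    omega
  · rintro ⟨r, ⟨hr, h⟩, rfl, rfl⟩
    rw [← mem_iff_lt_colLen, mem_iff_lt_rowLen] at hr
    exact ⟨by rw [mem_iff_lt_rowLen]; omega, by omega, h⟩

theorem ncard_wLeft_fiber (c : ℤ × ℤ) :
    {x | x ∉ μ ∧ wLeft μ η x = c}.ncard =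
      {y | wMac y = c}.ncard + {z | z ∈ η ∧ wRight μ η z = c}.ncard := by
  obtain ⟨a, b⟩ := c
  rcases lt_or_ge a 0 with ha | ha
  · have hL : {x | x ∉ μ ∧ wLeft μ η x = (a, b)} = ∅ :=
      Set.eq_empty_of_forall_notMem fun x ⟨hx, hw⟩ => by
        have := fst_wLeft_nonneg (η := η) hx
        rw [hw] at this
        exact ha.not_ge this
    have hM : {y | wMac y = (a, b)} = ∅ :=
      Set.eq_empty_of_forall_notMem fun y hw => by
        have : 0 ≤ (wMac y).1 := Int.natCast_nonneg _
        rw [hw] at this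
        exact ha.not_ge this
    have hR : {z | z ∈ η ∧ wRight μ η z = (a, b)} = ∅ :=
      Set.eq_empty_of_forall_notMem fun z ⟨hz, hw⟩ => by
        have := fst_wRight_nonneg (μ := μ) hz
        rw [hw] at this
        exact ha.not_ge this
    simp [hL, hM, hR]
  lift a to ℕ using ha with n
  rw [setOf_wLeft_eq_image, setOf_wRight_eq_image,
    Set.ncard_image_of_injective _ fun _ _ h => congrArg Prod.fst h,
    Set.ncard_image_of_injective _ fun _ _ h => congrArg Prod.fst h, ncard_wMac_fiber]
  exact ncard_setOf_add_one_sub_eq (fun r => colLen_le_iff_lt_colLen μ η (r := r))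
    (fun i => η.colLen_anti _ _ (Nat.le_add_left n _)) b

def wMin : ℤ × ℤ := (-(μ.rowLen 0 : ℤ), -(η.colLen 0 : ℤ))

theorem wMin_nonpos : wMin μ η ≤ 0 := by
  simp [wMin, Prod.le_def]

theorem wMin_le_wMac (y : ℕ × ℕ) : wMin μ η ≤ wMac y := by
  simp only [wMin, wMac, Prod.mk_le_mk]
  omega

theorem wMin_le_wLeft (x : ℕ × ℕ) : wMin μ η ≤ wLeft μ η x := by
  obtain ⟨i, j⟩ := x
  have := μ.rowLen_anti 0 i i.zero_le
  have := η.colLen_anti 0 j j.zero_le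
  simp only [wMin, wLeft_mk, Prod.mk_le_mk]
  omega

theorem finite_setOf_wMac_le (U : ℤ × ℤ) : {y | wMac y ≤ U}.Finite :=
  (Set.finite_Iic (U.1.toNat, U.2.toNat)).subset fun ⟨i, j⟩ h => by
    simp only [wMac, Set.mem_ofPred_eq, Prod.le_def] at h
    simp only [Set.mem_Iic, Prod.mk_le_mk]
    omega

theorem finite_setOf_wLeft_le (U : ℤ × ℤ) : {x | wLeft μ η x ≤ U}.Finite :=
  (Set.finite_Iic ((U.2 + η.colLen 0).toNat, (U.1 + μ.rowLen 0).toNat)).subset fun x h => by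
    obtain ⟨i, j⟩ := x
    have := μ.rowLen_anti 0 i i.zero_le
    have := η.colLen_anti 0 j j.zero_le
    simp only [wLeft_mk, Set.mem_ofPred_eq, Prod.le_def] at h
    simp only [Set.mem_Iic, Prod.mk_le_mk]
    omega

def splitWeight : (ℕ × ℕ) ⊕ (μ.cells ⊕ η.cells) → ℤ × ℤ :=
  Sum.elim wMac (Sum.elim (fun x => wLeft μ η x) (fun z => wRight μ η z))

theorem exists_equiv_splitWeight :
    ∃ Ψ : ℕ × ℕ ≃ (ℕ × ℕ) ⊕ (μ.cells ⊕ η.cells), ∀ x, splitWeight μ η (Ψ x) = wLeft μ η x := by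
  have hfin (c : ℤ × ℤ) : {x | wLeft μ η x = c}.Finite :=
    (finite_setOf_wLeft_le μ η c).subset fun _ h => le_of_eq h
  have hmac (c : ℤ × ℤ) : {y | wMac y = c}.Finite :=
    (finite_setOf_wMac_le c).subset fun _ h => le_of_eq h
  have hcells (s : Finset (ℕ × ℕ)) (w : ℕ × ℕ → ℤ × ℤ) (c : ℤ × ℤ) :
      Nat.card {x : s // w x = c} = {x | x ∈ s ∧ w x = c}.ncard :=
    (Nat.card_congr (Equiv.subtypeSubtypeEquivSubtypeInter (· ∈ s) (w · = c))).trans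
      (Nat.card_coe_set_eq {x | x ∈ s ∧ w x = c})
  have hsplit (c : ℤ × ℤ) : {b // splitWeight μ η b = c} ≃
      {y // wMac y = c} ⊕ ({x : μ.cells // wLeft μ η x = c} ⊕ {z : η.cells // wRight μ η z = c}) :=
    Equiv.subtypeSum.trans (Equiv.sumCongr (.refl _) Equiv.subtypeSum)
  have (c : ℤ × ℤ) : Finite {y // wMac y = c} := (hmac c).to_subtype
  refine exists_equiv_comp_eq_of_card_fiber_eq (fun c => (hfin c).to_subtype)
    (fun c => .of_equiv _ (hsplit c).symm) fun c => ?_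
  have hL : Nat.card {a // wLeft μ η a = c} = {x | wLeft μ η x = c}.ncard :=
    Nat.card_coe_set_eq _
  have hM : Nat.card {y // wMac y = c} = {y | wMac y = c}.ncard := Nat.card_coe_set_eq _
  rw [Nat.card_congr (hsplit c), Nat.card_sum, Nat.card_sum, hcells, hcells, hL, hM,
    ← Set.ncard_inter_add_ncard_sdiff_eq_ncard {x | wLeft μ η x = c} {x | x ∈ μ} (hfin c)]
  have hin : {x | wLeft μ η x = c} ∩ {x | x ∈ μ} = {x | x ∈ μ.cells ∧ wLeft μ η x = c} := by
    ext; simp [and_comm]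
  have hsd : {x | wLeft μ η x = c} \ {x | x ∈ μ} = {x | x ∉ μ ∧ wLeft μ η x = c} := by
    ext; simp [and_comm]
  simp only [hin, hsd, ncard_wLeft_fiber, mem_cells]
  ring

def lhsSet (d : ℕ) (c : ℤ × ℤ) : Set (Multiset (ℕ × ℕ) × Finset (ℕ × ℕ)) :=
  {p | Multiset.card p.1 + p.2.card = d ∧ (p.1.map wMac).sum + ∑ x ∈ p.2, wLeft μ η x = c}

def lhsWeights (p : Multiset (ℕ × ℕ) × Finset (ℕ × ℕ)) : Multiset (ℤ × ℤ) :=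
  p.1.map wMac + p.2.val.map (wLeft μ η)

variable {μ η} {d : ℕ} {c : ℤ × ℤ} {p : Multiset (ℕ × ℕ) × Finset (ℕ × ℕ)}

theorem wMin_le_of_mem_lhsWeights {w : ℤ × ℤ} (hw : w ∈ lhsWeights μ η p) : wMin μ η ≤ w := by
  obtain ⟨y, -, rfl⟩ | ⟨x, -, rfl⟩ := Multiset.mem_add.mp hw |>.imp Multiset.mem_map.mp
    Multiset.mem_map.mp
  exacts [wMin_le_wMac μ η y, wMin_le_wLeft μ η x]

theorem sum_lhsWeights (hp : p ∈ lhsSet μ η d c) : (lhsWeights μ η p).sum = c := by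
  rw [lhsWeights, Multiset.sum_add, ← hp.2, Finset.sum_eq_multiset_sum]

theorem card_lhsWeights (hp : p ∈ lhsSet μ η d c) : Multiset.card (lhsWeights μ η p) = d := by
  simpa [lhsWeights] using hp.1

theorem nsmul_wMin_le_of_mem_lhsSet (hp : p ∈ lhsSet μ η d c) : d • wMin μ η ≤ c := by
  rw [← sum_lhsWeights hp, ← card_lhsWeights hp]
  exact Multiset.card_nsmul_le_sum fun _ => wMin_le_of_mem_lhsWeights

theorem le_sub_nsmul_wMin_of_mem_lhsSet (hp : p ∈ lhsSet μ η d c) {w : ℤ × ℤ}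
    (hw : w ∈ lhsWeights μ η p) : w ≤ c - d • wMin μ η := by
  rw [← sum_lhsWeights hp, ← card_lhsWeights hp]
  exact Multiset.le_sum_sub_card_nsmul (wMin_nonpos μ η) (fun _ => wMin_le_of_mem_lhsWeights) hw

variable (μ η d c) in
theorem lhsSet_finite : (lhsSet μ η d c).Finite := by
  set U := c - d • wMin μ η
  have hE := finite_setOf_wLeft_le μ η U
  refine ((Multiset.finite_setOf_card_le (finite_setOf_wMac_le U) d).prod
    hE.toFinset.powerset.finite_toSet).subset
      fun p hp => ⟨⟨by have := hp.1; omega, fun y hy => ?_⟩, ?_⟩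
  · exact le_sub_nsmul_wMin_of_mem_lhsSet hp
      (Multiset.mem_add.mpr (.inl (Multiset.mem_map_of_mem _ hy)))
  · rw [Finset.mem_coe, Finset.mem_powerset]
    intro x hx
    rw [Set.Finite.mem_toFinset]
    exact le_sub_nsmul_wMin_of_mem_lhsSet hp
      (Multiset.mem_add.mpr (.inr (Multiset.mem_map_of_mem _ hx)))

variable (μ η) in
noncomputable def lhsFinset (d : ℕ) (c : ℤ × ℤ) : Finset (Multiset (ℕ × ℕ) × Finset (ℕ × ℕ)) :=
  (lhsSet_finite μ η d c).toFinset

theorem mem_lhsFinset {d : ℕ} {c : ℤ × ℤ} {p : Multiset (ℕ × ℕ) × Finset (ℕ × ℕ)} :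
    p ∈ lhsFinset μ η d c ↔ p ∈ lhsSet μ η d c :=
  Set.Finite.mem_toFinset _

theorem lhsCoeff_eq_sum (d : ℕ) (A B : ℤ) :
    lhsCoeff μ η d A B = ∑ p ∈ lhsFinset μ η d (A, B), (-1) ^ p.2.card := by
  rw [← sum_fiberwise_of_maps_to (g := fun p => p.2.card) (t := range (d + 1)) fun p hp =>
    mem_range.mpr (by have := (mem_lhsFinset.mp hp).1; omega)]
  refine sum_congr rfl fun d₂ hd₂ => ?_
  have hP : pairSet μ η (d - d₂) d₂ A B = ↑{p ∈ lhsFinset μ η d (A, B) | p.2.card = d₂} := by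
    ext p
    simp only [pairSet, lhsSet, coe_filter, mem_lhsFinset, Set.mem_ofPred_eq, mem_range] at hd₂ ⊢
    constructor
    · rintro ⟨h1, h2, h3⟩
      exact ⟨⟨by omega, h3⟩, h2⟩
    · rintro ⟨⟨h1, h3⟩, h2⟩
      exact ⟨by omega, h2, h3⟩
  rw [hP, Set.ncard_coe_finset, sum_congr rfl fun p hp => by rw [(mem_filter.mp hp).2],
    sum_const, nsmul_eq_mul, mul_comm]

section Split

variable {Ψ : ℕ × ℕ ≃ (ℕ × ℕ) ⊕ (μ.cells ⊕ η.cells)}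
  (hΨ : ∀ x, splitWeight μ η (Ψ x) = wLeft μ η x) {d : ℕ} {c : ℤ × ℤ}
include hΨ

theorem mem_map_prodFinsetSplit
    {q : (Multiset (ℕ × ℕ) × Finset (ℕ × ℕ)) × Finset (μ.cells ⊕ η.cells)} :
    q ∈ (lhsFinset μ η d c).map (Equiv.prodFinsetSplit Ψ).toEmbedding ↔
      Multiset.card (q.1.1 + q.1.2.val) + q.2.card = d ∧
        ((q.1.1 + q.1.2.val).map wMac).sum + ∑ b ∈ q.2, splitWeight μ η (.inr b) = c := by
  obtain ⟨⟨m, f⟩, b⟩ := q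
  have hw : ∀ u, wLeft μ η (Ψ.symm u) = splitWeight μ η u := fun u => by
    rw [← hΨ, Equiv.apply_symm_apply]
  rw [mem_map_equiv, mem_lhsFinset, Equiv.prodFinsetSplit_symm_apply]
  simp only [lhsSet, Set.mem_ofPred_eq, card_map, card_disjSum, sum_map, Equiv.coe_toEmbedding, hw,
    sum_disjSum, Multiset.card_add, Multiset.map_add, Multiset.sum_add, sum_map_val, card_val,
    add_assoc]
  rfl

theorem zero_empty_mem_map_prodFinsetSplit_iff {b : Finset (μ.cells ⊕ η.cells)} :
    ((0, ∅), b) ∈ (lhsFinset μ η d c).map (Equiv.prodFinsetSplit Ψ).toEmbedding ↔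
      b.card = d ∧ ∑ x ∈ b, splitWeight μ η (.inr x) = c := by
  rw [mem_map_prodFinsetSplit hΨ]
  simp

theorem card_filter_map_prodFinsetSplit (A B : ℤ) :
    #{q ∈ (lhsFinset μ η d (A, B)).map (Equiv.prodFinsetSplit Ψ).toEmbedding | q.1 = (0, ∅)} =
      #{p ∈ μ.cells.powerset ×ˢ η.cells.powerset | p.1.card + p.2.card = d ∧
        (∑ x ∈ p.1, wLeft μ η x) + (∑ x ∈ p.2, wRight μ η x) = (A, B)} := by
  refine card_nbij' (fun q => (q.2.toLeft.map (.subtype _), q.2.toRight.map (.subtype _)))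
    (fun p => ((0, ∅), (p.1.subtype (· ∈ μ.cells)).disjSum (p.2.subtype (· ∈ η.cells))))
    ?_ ?_ ?_ ?_
  · rintro ⟨q, b⟩ hq
    simp only [coe_filter, Set.mem_ofPred_eq] at hq
    obtain ⟨hq, rfl⟩ := hq
    obtain ⟨hcard, hsum⟩ := (zero_empty_mem_map_prodFinsetSplit_iff hΨ).mp hq
    simp only [coe_filter, Set.mem_ofPred_eq, mem_product, mem_powerset, card_map]
    refine ⟨⟨fun x hx => property_of_mem_map_subtype _ hx,
      fun x hx => property_of_mem_map_subtype _ hx⟩,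
      by rw [card_toLeft_add_card_toRight, hcard], ?_⟩
    rw [sum_map, sum_map, ← hsum, sum_sum_eq_sum_toLeft_add_sum_toRight]
    rfl
  · rintro ⟨r, t⟩ hp
    simp only [coe_filter, Set.mem_ofPred_eq, mem_product, mem_powerset] at hp
    obtain ⟨⟨hr, ht⟩, hcard, hsum⟩ := hp
    simp only [coe_filter, Set.mem_ofPred_eq, zero_empty_mem_map_prodFinsetSplit_iff hΨ, and_true]
    refine ⟨?_, ?_⟩
    · rw [card_disjSum, card_subtype, card_subtype, filter_true_of_mem hr, filter_true_of_mem ht,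
        hcard]
    · rw [sum_disjSum, ← hsum]
      exact congrArg₂ (· + ·) (sum_subtype_of_mem (wLeft μ η) hr)
        (sum_subtype_of_mem (wRight μ η) ht)
  · rintro ⟨q, b⟩ hq
    simp only [coe_filter, Set.mem_ofPred_eq] at hq
    rw [hq.2, Prod.mk.injEq]
    refine ⟨rfl, ?_⟩
    conv_rhs => rw [← toLeft_disjSum_toRight (u := b)]
    congr 1 <;> ext x <;> simp
  · rintro ⟨r, t⟩ hp
    simp only [coe_filter, Set.mem_ofPred_eq, mem_product, mem_powerset] at hp
    simp only [toLeft_disjSum, toRight_disjSum, subtype_map_of_mem hp.1.1,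
      subtype_map_of_mem hp.1.2]

end Split

theorem lhsCoeff_eq_rhsCoeff (d : ℕ) (A B : ℤ) : lhsCoeff μ η d A B = rhsCoeff μ η d A B := by
  obtain ⟨Ψ, hΨ⟩ := exists_equiv_splitWeight μ η
  set S := (lhsFinset μ η d (A, B)).map (Equiv.prodFinsetSplit Ψ).toEmbedding
  calc lhsCoeff μ η d A B = ∑ p ∈ lhsFinset μ η d (A, B), (-1) ^ p.2.card := lhsCoeff_eq_sum d A B
    _ = ∑ q ∈ S, (-1) ^ q.1.2.card * (-1) ^ q.2.card := by
      rw [sum_map]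
      refine sum_congr rfl fun p _ => ?_
      rw [← pow_add, Equiv.coe_toEmbedding, Equiv.card_prodFinsetSplit]
    _ = ∑ q ∈ S with q.1 = (0, ∅), (-1) ^ q.2.card :=
      sum_neg_one_pow_card_mul_eq_sum_filter S (fun s b => Multiset.card s + b.card = d ∧
        (s.map wMac).sum + ∑ x ∈ b, splitWeight μ η (.inr x) = (A, B))
        (fun _ => mem_map_prodFinsetSplit hΨ) (fun b => (-1) ^ b.card)
    _ = (-1) ^ d * #{q ∈ S | q.1 = (0, ∅)} := by
      rw [sum_congr rfl fun q hq => ?_, sum_const, nsmul_eq_mul, mul_comm]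
      obtain ⟨hqS, hq0⟩ := mem_filter.mp hq
      rw [← Prod.mk.eta (p := q), hq0, zero_empty_mem_map_prodFinsetSplit_iff hΨ] at hqS
      rw [hqS.1]
    _ = rhsCoeff μ η d A B := by rw [card_filter_map_prodFinsetSplit hΨ]; rfl

theorem rhsCoeff_eq_zero_of_lt {d : ℕ} (hd : μ.cells.card + η.cells.card < d) (A B : ℤ) :
    rhsCoeff μ η d A B = 0 := by
  rw [rhsCoeff, card_eq_zero.mpr, Nat.cast_zero, mul_zero]
  refine filter_eq_empty_iff.mpr fun p hp ⟨hcard, _⟩ => ?_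
  obtain ⟨hs, ht⟩ := mem_product.mp hp
  have := card_le_card (mem_powerset.mp hs)
  have := card_le_card (mem_powerset.mp ht)
  omega

end YoungDiagram

/-- The coefficient of `k^d u^A v^B` on the left-hand side is well defined (the counting
sets are finite), is nonzero only when `A ≥ −d μ₁` and `B ≥ −d η'₁`, vanishes for
`d > |μ| + |η|` (so the left side is a polynomial in `k`), and agrees with the
corresponding coefficient of the finite product on the right-hand side. -/
theorem statement1 (μ η : YoungDiagram) (d : ℕ) (A B : ℤ) :
    (∀ d₂ ≤ d, (pairSet μ η (d - d₂) d₂ A B).Finite) ∧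
    (lhsCoeff μ η d A B ≠ 0 →
      -(d : ℤ) * μ.rowLen 0 ≤ A ∧ -(d : ℤ) * η.colLen 0 ≤ B) ∧
    (μ.cells.card + η.cells.card < d → lhsCoeff μ η d A B = 0) ∧
    lhsCoeff μ η d A B = rhsCoeff μ η d A B := by
  refine ⟨fun d₂ hd₂ => (YoungDiagram.lhsSet_finite μ η d (A, B)).subset
      fun p ⟨h₁, h₂, h₃⟩ => ⟨by omega, h₃⟩,
    fun hne => ?_, fun hd => ?_, YoungDiagram.lhsCoeff_eq_rhsCoeff d A B⟩
  · rw [YoungDiagram.lhsCoeff_eq_sum] at hne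
    obtain ⟨p, hp, -⟩ := exists_ne_zero_of_sum_ne_zero hne
    have := YoungDiagram.nsmul_wMin_le_of_mem_lhsSet (YoungDiagram.mem_lhsFinset.mp hp)
    simp only [YoungDiagram.wMin, Prod.smul_mk, nsmul_eq_mul, Prod.mk_le_mk] at this
    constructor <;> linarith
  · rw [YoungDiagram.lhsCoeff_eq_rhsCoeff, YoungDiagram.rhsCoeff_eq_zero_of_lt hd]
end

section
/- For any partition γ, the following identity holds in the ring of Laurent polynomials ℤ[u^{±1/2}, v^{±1/2}]: u^{‖γ‖²/2} v^{‖γ'‖²/2} · ∏_{x∈γ} (1 − u^{−a_γ(x)−1} v^{−l_γ(x)}) (1 − u^{a_γ(x)} v^{l_γ(x)+1}) = (−1)^{|γ|} (v/u)^{|γ|/2} · ∏_{x∈γ} (1 − u^{a_γ(x)+1} v^{l_γ(x)}) · ∏_{x∈γ'} (1 − u^{l_{γ'}(x)} v^{a_{γ'}(x)+1}). -/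
/-- `‖γ‖² = ∑ᵢ γᵢ²` (the sum over the finitely many nonzero rows). -/
def normSq (γ : YoungDiagram) : ℕ := ∑ i ∈ Finset.range (γ.colLen 0), (γ.rowLen i) ^ 2


open Finset

lemma cells_eq_biUnion (γ : YoungDiagram) :
    γ.cells = (Finset.range (γ.colLen 0)).biUnion γ.row := by
  ext c
  simp only [Finset.mem_biUnion, Finset.mem_range, YoungDiagram.mem_row_iff,
    YoungDiagram.mem_cells]
  constructor
  · intro hc
    refine ⟨c.1, ?_, hc, rfl⟩
    rw [← YoungDiagram.mem_iff_lt_colLen]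
    exact γ.up_left_mem le_rfl (Nat.zero_le _) (by simpa using hc)
  · rintro ⟨i, _, hc, rfl⟩; exact hc

lemma sum_cells {M : Type*} [AddCommMonoid M] (γ : YoungDiagram) (f : ℕ × ℕ → M) :
    ∑ x ∈ γ.cells, f x =
      ∑ i ∈ Finset.range (γ.colLen 0), ∑ j ∈ Finset.range (γ.rowLen i), f (i, j) := by
  rw [cells_eq_biUnion, Finset.sum_biUnion]
  · refine Finset.sum_congr rfl fun i _ => ?_
    rw [YoungDiagram.row_eq_prod, Finset.sum_product, Finset.sum_singleton]
  · intro a _ b _ hab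
    simp only [Finset.disjoint_left, YoungDiagram.mem_row_iff]
    rintro c ⟨_, rfl⟩ ⟨_, h⟩
    exact hab h

lemma card_cells (γ : YoungDiagram) :
    γ.cells.card = ∑ i ∈ Finset.range (γ.colLen 0), γ.rowLen i := by
  rw [Finset.card_eq_sum_ones, sum_cells]
  simp

lemma cells_transpose (γ : YoungDiagram) :
    γ.transpose.cells = γ.cells.map ⟨Prod.swap, Prod.swap_injective⟩ := by
  ext c
  simp only [Finset.mem_map, Function.Embedding.coeFn_mk, YoungDiagram.mem_cells,
    YoungDiagram.mem_transpose]
  constructor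
  · intro hc; exact ⟨c.swap, hc, Prod.swap_swap c⟩
  · rintro ⟨a, ha, rfl⟩; simpa using ha

lemma prod_cells_transpose {M : Type*} [CommMonoid M] (γ : YoungDiagram) (f : ℕ × ℕ → M) :
    ∏ x ∈ γ.transpose.cells, f x = ∏ x ∈ γ.cells, f x.swap := by
  rw [cells_transpose, Finset.prod_map]; rfl

lemma sum_cells_transpose {M : Type*} [AddCommMonoid M] (γ : YoungDiagram) (f : ℕ × ℕ → M) :
    ∑ x ∈ γ.transpose.cells, f x = ∑ x ∈ γ.cells, f x.swap := by
  rw [cells_transpose, Finset.sum_map]; rfl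

lemma card_cells_transpose (γ : YoungDiagram) :
    γ.transpose.cells.card = γ.cells.card := by
  rw [cells_transpose, Finset.card_map]

lemma gauss (r : ℕ) : ∑ j ∈ Finset.range r, ((r : ℤ) - j) * 2 = r ^ 2 + r := by
  induction r with
  | zero => simp
  | succ n ih =>
    have h : ∀ j ∈ Finset.range n, (((n + 1 : ℕ) : ℤ) - ((j + 1 : ℕ) : ℤ)) * 2
        = ((n : ℤ) - (j : ℤ)) * 2 := fun j _ => by push_cast; ring
    rw [Finset.sum_range_succ', Finset.sum_congr rfl h, ih]
    push_cast
    ring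

lemma prod_zpow_eq_zpow_sum {G : Type*} [CommGroup G] {ι : Type*} (s : Finset ι)
    (f : ι → ℤ) (g : G) : ∏ i ∈ s, g ^ f i = g ^ (∑ i ∈ s, f i) := by
  induction s using Finset.cons_induction with
  | empty => simp
  | cons a s ha ih => rw [Finset.prod_cons, Finset.sum_cons, ih, zpow_add]

lemma one_sub_unit {R : Type*} [CommRing R] (w : Rˣ) :
    (1 - (w : R)) = -(w : R) * (1 - ((w⁻¹ : Rˣ) : R)) := by
  have h := Units.mul_inv w
  linear_combination -h

lemma row_arm (γ : YoungDiagram) (i : ℕ) :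
    ∑ j ∈ Finset.range (γ.rowLen i), (-armZ γ (i, j) - 1) * 2
      = -((γ.rowLen i : ℤ) ^ 2 + γ.rowLen i) := by
  have h : ∀ j ∈ Finset.range (γ.rowLen i), (-armZ γ (i, j) - 1) * 2
      = -(((γ.rowLen i : ℤ) - j) * 2) := fun j _ => by simp only [armZ]; ring
  rw [Finset.sum_congr rfl h, Finset.sum_neg_distrib, gauss]

lemma sum_arm' (γ : YoungDiagram) :
    (normSq γ : ℤ) + 2 * ∑ x ∈ γ.cells, (-armZ γ x - 1) = -(γ.cells.card : ℤ) := by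
  rw [sum_cells, card_cells, normSq]
  push_cast
  rw [Finset.mul_sum, ← Finset.sum_add_distrib, ← Finset.sum_neg_distrib]
  refine Finset.sum_congr rfl fun i _ => ?_
  have h := row_arm γ i
  rw [← Finset.sum_mul] at h
  linarith

lemma sum_leg' (γ : YoungDiagram) :
    (normSq γ.transpose : ℤ) + 2 * ∑ x ∈ γ.cells, (-legZ γ x) = (γ.cells.card : ℤ) := by
  have h1 : ∑ x ∈ γ.cells, (-legZ γ x)
      = ∑ x ∈ γ.transpose.cells, (-armZ γ.transpose x) := by
    rw [sum_cells_transpose]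
    refine Finset.sum_congr rfl fun x hx => ?_
    simp [armZ, legZ]
  have h2 := sum_arm' γ.transpose
  have h3 : ∑ x ∈ γ.transpose.cells, (-armZ γ.transpose x - 1)
      = ∑ x ∈ γ.transpose.cells, (-armZ γ.transpose x) - γ.transpose.cells.card := by
    rw [Finset.sum_sub_distrib, Finset.sum_const, nsmul_eq_mul, mul_one]
  rw [h3, card_cells_transpose] at h2
  rw [h1]
  linarith

/-- For any partition `γ`:
`u^{‖γ‖²/2} v^{‖γ'‖²/2} ∏_{x∈γ} (1 − u^{−a_γ(x)−1} v^{−l_γ(x)})(1 − u^{a_γ(x)} v^{l_γ(x)+1})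
 = (−1)^{|γ|} (v/u)^{|γ|/2} ∏_{x∈γ} (1 − u^{a_γ(x)+1} v^{l_γ(x)}) ∏_{x∈γ'} (1 − u^{l_{γ'}(x)} v^{a_{γ'}(x)+1})`
in `ℤ[u^{±1/2}, v^{±1/2}]`. -/
theorem statement2 (γ : YoungDiagram) (R : Type*) [CommRing R] (uh vh : Rˣ) :
    (((uh : R)) ^ normSq γ) * (((vh : R)) ^ normSq γ.transpose) *
      ∏ x ∈ γ.cells,
        ((1 - ((uh ^ 2 : Rˣ) ^ (-armZ γ x - 1) * (vh ^ 2 : Rˣ) ^ (-legZ γ x) : Rˣ) : R) *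
         (1 - ((uh ^ 2 : Rˣ) ^ (armZ γ x) * (vh ^ 2 : Rˣ) ^ (legZ γ x + 1) : Rˣ) : R))
    = (-1 : R) ^ γ.cells.card * ((vh * uh⁻¹ : Rˣ) : R) ^ γ.cells.card *
      (∏ x ∈ γ.cells,
        (1 - ((uh ^ 2 : Rˣ) ^ (armZ γ x + 1) * (vh ^ 2 : Rˣ) ^ (legZ γ x) : Rˣ) : R)) *
      (∏ x ∈ γ.transpose.cells,
        (1 - ((uh ^ 2 : Rˣ) ^ (legZ γ.transpose x) *
              (vh ^ 2 : Rˣ) ^ (armZ γ.transpose x + 1) : Rˣ) : R)) := by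
  -- the transpose product equals the second product over γ
  have htr : (∏ x ∈ γ.transpose.cells,
        (1 - ((uh ^ 2 : Rˣ) ^ (legZ γ.transpose x) *
              (vh ^ 2 : Rˣ) ^ (armZ γ.transpose x + 1) : Rˣ) : R))
      = ∏ x ∈ γ.cells,
        (1 - ((uh ^ 2 : Rˣ) ^ (armZ γ x) * (vh ^ 2 : Rˣ) ^ (legZ γ x + 1) : Rˣ) : R) := by
    rw [prod_cells_transpose]
    refine Finset.prod_congr rfl fun x hx => ?_
    have h1 : legZ γ.transpose x.swap = armZ γ x := by simp [legZ, armZ]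
    have h2 : armZ γ.transpose x.swap = legZ γ x := by simp [legZ, armZ]
    rw [h1, h2]
  -- inverse computation
  have hW : ∀ x : ℕ × ℕ,
      ((uh ^ 2 : Rˣ) ^ (-armZ γ x - 1) * (vh ^ 2 : Rˣ) ^ (-legZ γ x))⁻¹
        = (uh ^ 2 : Rˣ) ^ (armZ γ x + 1) * (vh ^ 2 : Rˣ) ^ (legZ γ x) := by
    intro x
    rw [mul_inv, ← zpow_neg, ← zpow_neg, neg_neg,
      show -(-armZ γ x - 1) = armZ γ x + 1 from by ring]
  -- factor the left-hand product
  have hfac : (∏ x ∈ γ.cells,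
        ((1 - ((uh ^ 2 : Rˣ) ^ (-armZ γ x - 1) * (vh ^ 2 : Rˣ) ^ (-legZ γ x) : Rˣ) : R) *
         (1 - ((uh ^ 2 : Rˣ) ^ (armZ γ x) * (vh ^ 2 : Rˣ) ^ (legZ γ x + 1) : Rˣ) : R)))
      = ((-1 : R) ^ γ.cells.card *
          ((((uh ^ 2 : Rˣ) ^ (∑ x ∈ γ.cells, (-armZ γ x - 1)) *
             (vh ^ 2 : Rˣ) ^ (∑ x ∈ γ.cells, (-legZ γ x))) : Rˣ) : R)) *
        ((∏ x ∈ γ.cells,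
          (1 - ((uh ^ 2 : Rˣ) ^ (armZ γ x + 1) * (vh ^ 2 : Rˣ) ^ (legZ γ x) : Rˣ) : R)) *
         (∏ x ∈ γ.cells,
          (1 - ((uh ^ 2 : Rˣ) ^ (armZ γ x) * (vh ^ 2 : Rˣ) ^ (legZ γ x + 1) : Rˣ) : R))) := by
    have step : ∀ x ∈ γ.cells,
        ((1 - ((uh ^ 2 : Rˣ) ^ (-armZ γ x - 1) * (vh ^ 2 : Rˣ) ^ (-legZ γ x) : Rˣ) : R) *
         (1 - ((uh ^ 2 : Rˣ) ^ (armZ γ x) * (vh ^ 2 : Rˣ) ^ (legZ γ x + 1) : Rˣ) : R))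
        = ((-1 : R) * (((uh ^ 2 : Rˣ) ^ (-armZ γ x - 1) * (vh ^ 2 : Rˣ) ^ (-legZ γ x) : Rˣ) : R)) *
          ((1 - ((uh ^ 2 : Rˣ) ^ (armZ γ x + 1) * (vh ^ 2 : Rˣ) ^ (legZ γ x) : Rˣ) : R) *
           (1 - ((uh ^ 2 : Rˣ) ^ (armZ γ x) * (vh ^ 2 : Rˣ) ^ (legZ γ x + 1) : Rˣ) : R)) := by
      intro x _
      rw [one_sub_unit ((uh ^ 2 : Rˣ) ^ (-armZ γ x - 1) * (vh ^ 2 : Rˣ) ^ (-legZ γ x)), hW x]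
      ring
    rw [Finset.prod_congr rfl step, Finset.prod_mul_distrib, Finset.prod_mul_distrib,
      Finset.prod_mul_distrib, Finset.prod_const]
    have hU : (∏ x ∈ γ.cells,
          ((uh ^ 2 : Rˣ) ^ (-armZ γ x - 1) * (vh ^ 2 : Rˣ) ^ (-legZ γ x)) : Rˣ)
        = (uh ^ 2 : Rˣ) ^ (∑ x ∈ γ.cells, (-armZ γ x - 1)) *
          (vh ^ 2 : Rˣ) ^ (∑ x ∈ γ.cells, (-legZ γ x)) := by
      rw [Finset.prod_mul_distrib, prod_zpow_eq_zpow_sum, prod_zpow_eq_zpow_sum]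
    have hval : (∏ x ∈ γ.cells,
          (((uh ^ 2 : Rˣ) ^ (-armZ γ x - 1) * (vh ^ 2 : Rˣ) ^ (-legZ γ x) : Rˣ) : R))
        = ((((uh ^ 2 : Rˣ) ^ (∑ x ∈ γ.cells, (-armZ γ x - 1)) *
             (vh ^ 2 : Rˣ) ^ (∑ x ∈ γ.cells, (-legZ γ x))) : Rˣ) : R) := by
      rw [← hU]
      have := map_prod (Units.coeHom R)
        (fun x => ((uh ^ 2 : Rˣ) ^ (-armZ γ x - 1) * (vh ^ 2 : Rˣ) ^ (-legZ γ x))) γ.cells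
      simpa using this.symm
    rw [hval]
  -- the unit-level identity
  have hzp : ∀ (g : Rˣ) (m : ℤ), (g ^ 2) ^ m = g ^ (2 * m) := by
    intro g m
    rw [← zpow_natCast g 2, ← zpow_mul]
    norm_num
  have hu : (uh ^ normSq γ * vh ^ normSq γ.transpose *
        ((uh ^ 2 : Rˣ) ^ (∑ x ∈ γ.cells, (-armZ γ x - 1)) *
         (vh ^ 2 : Rˣ) ^ (∑ x ∈ γ.cells, (-legZ γ x))) : Rˣ)
      = (vh * uh⁻¹) ^ γ.cells.card := by
    rw [hzp uh, hzp vh, ← zpow_natCast uh (normSq γ), ← zpow_natCast vh (normSq γ.transpose)]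
    rw [mul_mul_mul_comm, ← zpow_add, ← zpow_add]
    rw [sum_arm' γ, sum_leg' γ, mul_pow, zpow_neg, zpow_natCast, zpow_natCast, inv_pow]
    exact mul_comm _ _
  rw [htr, hfac]
  have huR := congrArg (Units.val) hu
  simp only [Units.val_mul, Units.val_pow_eq_pow_val] at huR ⊢
  linear_combination ((-1 : R) ^ γ.cells.card *
    (∏ x ∈ γ.cells,
      (1 - ((uh ^ 2 : Rˣ) ^ (armZ γ x + 1) * (vh ^ 2 : Rˣ) ^ (legZ γ x) : Rˣ) : R)) *
    (∏ x ∈ γ.cells,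
      (1 - ((uh ^ 2 : Rˣ) ^ (armZ γ x) * (vh ^ 2 : Rˣ) ^ (legZ γ x + 1) : Rˣ) : R))) * huR
end
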